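/- Let W = 𝔖_g ⋉ (ℤ/2ℤ)^g act on ℤ[q^{±1}, α_1^{±1},…,α_g^{±1}] by fixing q, with 𝔖_g permuting the α_i and the i-th copy of ℤ/2ℤ sending α_i ↦ q α_i^{-1} and fixing the other α_j. Define x_i := α_i + q α_i^{-1}. Then the ring of invariants R_g := ℤ[q^{±1}, α_•^{±1}]^W is a free ℤ[q^{±1}]-algebra on the elementary symmetric polynomials y_1,…,y_g of x_1,…,x_g; in particular every W-invariant Laurent polynomial can be written uniquely as a polynomial in y_1,…,y_g with coefficients in ℤ[q^{±1}]. -/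

import Mathlib

/-- The Laurent polynomial ring `ℤ[q^{±1}, α_1^{±1}, …, α_g^{±1}]`, realized as the group
algebra of `ℤ^{g+1}`; index `0` is `q` and index `i.succ` is `α_i` for `i : Fin g`. -/
abbrev Laur1 (g : ℕ) : Type := AddMonoidAlgebra ℤ (Fin (g + 1) →₀ ℤ)

/-- The `i`-th Laurent variable as a unit of `ℤ[q^{±1}, α_•^{±1}]`. -/
noncomputable def uvar (g : ℕ) (i : Fin (g + 1)) : (Laur1 g)ˣ where
  val := AddMonoidAlgebra.single (Finsupp.single i 1) 1
  inv := AddMonoidAlgebra.single (Finsupp.single i (-1)) 1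
  val_inv := by
    rw [AddMonoidAlgebra.single_mul_single, ← Finsupp.single_add]
    norm_num
    exact (AddMonoidAlgebra.one_def).symm
  inv_val := by
    rw [AddMonoidAlgebra.single_mul_single, ← Finsupp.single_add]
    norm_num
    exact (AddMonoidAlgebra.one_def).symm

/-- The substitution (monomial) algebra endomorphism of `ℤ[q^{±1}, α_•^{±1}]` sending the
`i`-th Laurent variable to the unit `v i`. -/
noncomputable def substHom (g : ℕ) (v : Fin (g + 1) → (Laur1 g)ˣ) :
    Laur1 g →ₐ[ℤ] Laur1 g :=
  AddMonoidAlgebra.lift ℤ (Laur1 g) (Fin (g + 1) →₀ ℤ)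
    { toFun := fun e => ↑(∏ i : Fin (g + 1), v i ^ ((Multiplicative.toAdd e) i))
      map_one' := by simp
      map_mul' := by
        intro a b
        rw [← Units.val_mul, ← Finset.prod_mul_distrib]
        simp [zpow_add] }

/-- The assignment of variables corresponding to a permutation `σ ∈ 𝔖_g`: it fixes `q`
and sends `α_i ↦ α_{σ(i)}`. -/
noncomputable def permAssign (g : ℕ) (σ : Equiv.Perm (Fin g)) :
    Fin (g + 1) → (Laur1 g)ˣ :=
  fun j => Fin.cases (uvar g 0) (fun i => uvar g (σ i).succ) j

/-- The assignment of variables corresponding to the `t`-th involution in `(ℤ/2ℤ)^g`: it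
fixes `q` and the `α_j` for `j ≠ t`, and sends `α_t ↦ q·α_t^{-1}`. -/
noncomputable def invAssign (g : ℕ) (t : Fin g) : Fin (g + 1) → (Laur1 g)ˣ :=
  fun j => if j = t.succ then uvar g 0 * (uvar g t.succ)⁻¹ else uvar g j

/-- The invariant element `x_i := α_i + q·α_i^{-1}`. -/
noncomputable def xElt (g : ℕ) (i : Fin g) : Laur1 g :=
  ↑(uvar g i.succ) + ↑(uvar g 0 * (uvar g i.succ)⁻¹)

/-- The `j`-th elementary symmetric polynomial `y_j := e_j(x_1, …, x_g)` of the `x_i`. -/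
noncomputable def yElt (g : ℕ) (j : ℕ) : Laur1 g :=
  ∑ s ∈ Finset.powersetCard j (Finset.univ : Finset (Fin g)), ∏ i ∈ s, xElt g i

/-- The coefficient embedding `ℤ[q^{±1}] → ℤ[q^{±1}, α_•^{±1}]` sending `T ↦ q`. -/
noncomputable def qCoeff (g : ℕ) : LaurentPolynomial ℤ →ₐ[ℤ] Laur1 g :=
  AddMonoidAlgebra.lift ℤ (Laur1 g) ℤ
    { toFun := fun e => ↑(uvar g 0 ^ Multiplicative.toAdd e)
      map_one' := by simp
      map_mul' := by
        intro a b
        rw [← Units.val_mul]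
        simp [zpow_add] }

/-- The evaluation map `ℤ[q^{±1}][Y_1, …, Y_g] → ℤ[q^{±1}, α_•^{±1}]` sending `q ↦ q` and
`Y_j ↦ y_j = e_j(x_1, …, x_g)`. -/
noncomputable def theta (g : ℕ) :
    MvPolynomial (Fin g) (LaurentPolynomial ℤ) →+* Laur1 g :=
  MvPolynomial.eval₂Hom (qCoeff g).toRingHom (fun i => yElt g (i.1 + 1))

namespace Stmt9

open AddMonoidAlgebra LaurentPolynomial

noncomputable abbrev Kr (g : ℕ) : Type := AddMonoidAlgebra (LaurentPolynomial ℤ) (Fin g →₀ ℤ)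

noncomputable def uq (g : ℕ) : (Kr g)ˣ where
  val := AddMonoidAlgebra.single 0 (T 1)
  inv := AddMonoidAlgebra.single 0 (T (-1))
  val_inv := by
    rw [AddMonoidAlgebra.single_mul_single, ← T_add]
    norm_num
    exact (AddMonoidAlgebra.one_def).symm
  inv_val := by
    rw [AddMonoidAlgebra.single_mul_single, ← T_add]
    norm_num
    exact (AddMonoidAlgebra.one_def).symm

noncomputable def uX (g : ℕ) (i : Fin g) : (Kr g)ˣ where
  val := AddMonoidAlgebra.single (Finsupp.single i 1) 1
  inv := AddMonoidAlgebra.single (Finsupp.single i (-1)) 1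
  val_inv := by
    rw [AddMonoidAlgebra.single_mul_single, ← Finsupp.single_add]
    norm_num
    exact (AddMonoidAlgebra.one_def).symm
  inv_val := by
    rw [AddMonoidAlgebra.single_mul_single, ← Finsupp.single_add]
    norm_num
    exact (AddMonoidAlgebra.one_def).symm

theorem uq_zpow (g : ℕ) (n : ℤ) :
    ((uq g ^ n : (Kr g)ˣ) : Kr g) = AddMonoidAlgebra.single 0 (T n) := by
  cases n with
  | ofNat n =>
      rw [Int.ofNat_eq_coe, zpow_natCast, Units.val_pow_eq_pow_val]
      show (AddMonoidAlgebra.single (0 : Fin g →₀ ℤ) (T 1)) ^ n = _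
      rw [AddMonoidAlgebra.single_pow, smul_zero, T_pow]
      norm_num
  | negSucc n =>
      rw [zpow_negSucc, ← inv_pow, Units.val_pow_eq_pow_val]
      show (AddMonoidAlgebra.single (0 : Fin g →₀ ℤ) (T (-1))) ^ (n+1) = _
      rw [AddMonoidAlgebra.single_pow, smul_zero, T_pow]
      congr 1
      congr 1
      rw [Int.negSucc_eq]
      push_cast
      ring

theorem uX_zpow (g : ℕ) (i : Fin g) (n : ℤ) :
    ((uX g i ^ n : (Kr g)ˣ) : Kr g) = AddMonoidAlgebra.single (Finsupp.single i n) 1 := by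
  cases n with
  | ofNat n =>
      rw [Int.ofNat_eq_coe, zpow_natCast, Units.val_pow_eq_pow_val]
      show (AddMonoidAlgebra.single (Finsupp.single i (1:ℤ)) (1:LaurentPolynomial ℤ)) ^ n = _
      rw [AddMonoidAlgebra.single_pow, Finsupp.smul_single, one_pow]
      norm_num
  | negSucc n =>
      rw [zpow_negSucc, ← inv_pow, Units.val_pow_eq_pow_val]
      show (AddMonoidAlgebra.single (Finsupp.single i (-1:ℤ)) (1:LaurentPolynomial ℤ)) ^ (n+1) = _
      rw [AddMonoidAlgebra.single_pow, Finsupp.smul_single, one_pow]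
      congr 2
      simp only [nsmul_eq_mul]
      rw [Int.negSucc_eq]
      push_cast
      ring

theorem uvar_zpow (g : ℕ) (i : Fin (g+1)) (n : ℤ) :
    ((uvar g i ^ n : (Laur1 g)ˣ) : Laur1 g) = AddMonoidAlgebra.single (Finsupp.single i n) 1 := by
  cases n with
  | ofNat n =>
      rw [Int.ofNat_eq_coe, zpow_natCast, Units.val_pow_eq_pow_val]
      show (AddMonoidAlgebra.single (Finsupp.single i (1:ℤ)) (1:ℤ)) ^ n = _
      rw [AddMonoidAlgebra.single_pow, Finsupp.smul_single, one_pow]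
      norm_num
  | negSucc n =>
      rw [zpow_negSucc, ← inv_pow, Units.val_pow_eq_pow_val]
      show (AddMonoidAlgebra.single (Finsupp.single i (-1:ℤ)) (1:ℤ)) ^ (n+1) = _
      rw [AddMonoidAlgebra.single_pow, Finsupp.smul_single, one_pow]
      congr 2
      simp only [nsmul_eq_mul]
      rw [Int.negSucc_eq]
      push_cast
      ring

theorem prod_zpow_single {g : ℕ} {M : Type*} [CommGroup M] (v : Fin g → M) (j : Fin g) (n : ℤ) :
    (∏ i : Fin g, v i ^ (Finsupp.single j n) i) = v j ^ n := by
  rw [Finset.prod_eq_single j]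
  · rw [Finsupp.single_eq_same]
  · intro b _ hb
    rw [Finsupp.single_eq_of_ne' (Ne.symm hb), zpow_zero]
  · intro h; exact absurd (Finset.mem_univ j) h

theorem prod_uX_zpow (g : ℕ) (d : Fin g →₀ ℤ) :
    ((∏ i : Fin g, uX g i ^ d i : (Kr g)ˣ) : Kr g) = AddMonoidAlgebra.single d 1 := by
  rw [← Units.coeHom_apply, map_prod]
  simp_rw [Units.coeHom_apply, uX_zpow]
  rw [AddMonoidAlgebra.prod_single, Finset.prod_const_one, Finsupp.univ_sum_single]

theorem prod_uvar_zpow (g : ℕ) (e : Fin (g+1) →₀ ℤ) :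
    ((∏ i : Fin (g+1), uvar g i ^ e i : (Laur1 g)ˣ) : Laur1 g) = AddMonoidAlgebra.single e 1 := by
  rw [← Units.coeHom_apply, map_prod]
  simp_rw [Units.coeHom_apply, uvar_zpow]
  rw [AddMonoidAlgebra.prod_single, Finset.prod_const_one, Finsupp.univ_sum_single]

/-! ### flipE -/

noncomputable def flipE (g : ℕ) (t : Fin g) (e : Fin g →₀ ℤ) : Fin g →₀ ℤ :=
  e - Finsupp.single t (2 * e t)

theorem flipE_apply (g : ℕ) (t : Fin g) (e : Fin g →₀ ℤ) (j : Fin g) :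
    flipE g t e j = if j = t then -(e j) else e j := by
  rw [flipE, Finsupp.sub_apply, Finsupp.single_apply]
  rcases eq_or_ne t j with rfl | h
  · rw [if_pos rfl, if_pos rfl]
    ring
  · rw [if_neg h, if_neg (Ne.symm h), sub_zero]

theorem flipE_apply_self (g : ℕ) (t : Fin g) (e : Fin g →₀ ℤ) : flipE g t e t = -(e t) := by
  rw [flipE_apply, if_pos rfl]

theorem flipE_apply_ne (g : ℕ) (t : Fin g) (e : Fin g →₀ ℤ) {j : Fin g} (h : j ≠ t) :
    flipE g t e j = e j := by
  rw [flipE_apply, if_neg h]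

theorem flipE_add (g : ℕ) (t : Fin g) (a b : Fin g →₀ ℤ) :
    flipE g t (a + b) = flipE g t a + flipE g t b := by
  ext j
  rw [Finsupp.add_apply, flipE_apply, flipE_apply, flipE_apply, Finsupp.add_apply]
  split_ifs <;> ring

theorem flipE_zero (g : ℕ) (t : Fin g) : flipE g t 0 = 0 := by
  ext j
  rw [flipE_apply]
  split_ifs <;> simp

theorem flipE_flipE (g : ℕ) (t : Fin g) (e : Fin g →₀ ℤ) : flipE g t (flipE g t e) = e := by
  ext j
  rw [flipE_apply, flipE_apply]
  split_ifs <;> ring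

theorem flipE_inj (g : ℕ) (t : Fin g) {a b : Fin g →₀ ℤ} (h : flipE g t a = flipE g t b) :
    a = b := by
  have := congrArg (flipE g t) h
  rwa [flipE_flipE, flipE_flipE] at this

theorem flipE_single (g : ℕ) (t i : Fin g) (n : ℤ) :
    flipE g t (Finsupp.single i n) = Finsupp.single i (if i = t then -n else n) := by
  ext j
  rw [flipE_apply]
  rcases eq_or_ne i j with rfl | hij
  · rcases eq_or_ne i t with rfl | hjt
    · simp
    · simp [hjt]
  · rcases eq_or_ne j t with rfl | hjt
    · simp [Finsupp.single_apply, hij]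
    · simp [hjt, Finsupp.single_apply, hij]

/-! ### tau -/

noncomputable def tau (g : ℕ) (t : Fin g) : Kr g →ₐ[LaurentPolynomial ℤ] Kr g :=
  AddMonoidAlgebra.lift (LaurentPolynomial ℤ) (Kr g) (Fin g →₀ ℤ)
    { toFun := fun e =>
        ↑(uq g ^ ((Multiplicative.toAdd e) t) * ∏ i : Fin g, uX g i ^ (flipE g t (Multiplicative.toAdd e)) i)
      map_one' := by
        simp [flipE_zero]
      map_mul' := by
        intro a b
        show ((uq g ^ ((Multiplicative.toAdd a + Multiplicative.toAdd b) t)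
            * ∏ i : Fin g, uX g i ^ (flipE g t (Multiplicative.toAdd a + Multiplicative.toAdd b)) i
            : (Kr g)ˣ) : Kr g) = _
        rw [← Units.val_mul]
        congr 1
        rw [Finsupp.add_apply, zpow_add, flipE_add]
        have : (∏ i : Fin g, uX g i ^ (flipE g t (Multiplicative.toAdd a)
              + flipE g t (Multiplicative.toAdd b)) i)
            = (∏ i : Fin g, uX g i ^ (flipE g t (Multiplicative.toAdd a)) i)
              * ∏ i : Fin g, uX g i ^ (flipE g t (Multiplicative.toAdd b)) i := by
          rw [← Finset.prod_mul_distrib]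
          apply Finset.prod_congr rfl
          intro i _
          rw [Finsupp.add_apply, zpow_add]
        rw [this]
        exact mul_mul_mul_comm (uq g ^ (Multiplicative.toAdd a) t)
          (uq g ^ (Multiplicative.toAdd b) t) _ _ }

theorem tau_single (g : ℕ) (t : Fin g) (e : Fin g →₀ ℤ) (a : LaurentPolynomial ℤ) :
    tau g t (AddMonoidAlgebra.single e a)
      = AddMonoidAlgebra.single (flipE g t e) (T (e t) * a) := by
  rw [tau, AddMonoidAlgebra.lift_single]
  show a • ((uq g ^ (e t) * ∏ i : Fin g, uX g i ^ (flipE g t e) i : (Kr g)ˣ) : Kr g) = _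
  rw [Units.val_mul, uq_zpow, prod_uX_zpow, AddMonoidAlgebra.single_mul_single, zero_add, mul_one,
    AddMonoidAlgebra.smul_single, smul_eq_mul, mul_comm]

/-! ### xK, xPow -/

noncomputable def xK (g : ℕ) (i : Fin g) : Kr g :=
  AddMonoidAlgebra.single (Finsupp.single i 1) 1
    + AddMonoidAlgebra.single (Finsupp.single i (-1)) (T 1)

noncomputable def xPow (g : ℕ) (m : Fin g →₀ ℕ) : Kr g := ∏ i : Fin g, xK g i ^ m i

theorem tau_xK (g : ℕ) (t i : Fin g) : tau g t (xK g i) = xK g i := by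
  rw [xK, map_add, tau_single, tau_single, flipE_single, flipE_single]
  by_cases h : i = t
  · subst h
    rw [if_pos rfl, if_pos rfl]
    simp only [Finsupp.single_eq_same]
    rw [mul_one, ← T_add]
    norm_num
    rw [add_comm]
  · rw [if_neg h, if_neg h, Finsupp.single_eq_of_ne' h,
      Finsupp.single_eq_of_ne' h, T_zero, one_mul, one_mul]

theorem xPow_zero (g : ℕ) : xPow g 0 = 1 := by
  simp [xPow]

theorem xPow_add_single (g : ℕ) (m : Fin g →₀ ℕ) (j : Fin g) :
    xPow g (m + Finsupp.single j 1) = xPow g m * xK g j := by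
  rw [xPow, xPow]
  have step : ∀ i : Fin g, xK g i ^ (((m + Finsupp.single j 1) : Fin g →₀ ℕ) i)
      = xK g i ^ m i * xK g i ^ ((Finsupp.single j 1 : Fin g →₀ ℕ) i) := by
    intro i
    rw [Finsupp.add_apply, pow_add]
  rw [Finset.prod_congr rfl (fun i _ => step i), Finset.prod_mul_distrib]
  congr 1
  rw [Finset.prod_eq_single j (fun b _ hb => by
      rw [Finsupp.single_eq_of_ne' (Ne.symm hb), pow_zero])
    (fun h => absurd (Finset.mem_univ j) h), Finsupp.single_eq_same, pow_one]

theorem mul_xK_apply (g : ℕ) (h : Kr g) (j : Fin g) (e : Fin g →₀ ℤ) :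
    (h * xK g j).coeff e = h.coeff (e - Finsupp.single j 1) + T 1 * h.coeff (e + Finsupp.single j 1) := by
  rw [xK, mul_add, AddMonoidAlgebra.coeff_add, Finsupp.add_apply, AddMonoidAlgebra.coeff_mul_single_apply,
    AddMonoidAlgebra.coeff_mul_single_apply, mul_one]
  congr 1
  · rw [sub_eq_add_neg]
  rw [mul_comm]
  congr 2
  rw [Finsupp.single_neg, neg_neg]

/-! ### combinatorial core -/

theorem sum_single_one (g : ℕ) (j : Fin g) :
    (∑ i : Fin g, ((Finsupp.single j 1 : Fin g →₀ ℕ)) i) = 1 := by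
  rw [Finset.sum_eq_single j (fun b _ hb => Finsupp.single_eq_of_ne' (Ne.symm hb))
    (fun h => absurd (Finset.mem_univ j) h), Finsupp.single_eq_same]

theorem one_apply_ne (g : ℕ) (e : Fin g →₀ ℤ) (h : e ≠ 0) : (1 : Kr g).coeff e = 0 := by
  rw [AddMonoidAlgebra.one_def]
  exact Finsupp.single_eq_of_ne' (fun hh => h hh.symm)

theorem one_apply_zero (g : ℕ) : (1 : Kr g).coeff 0 = 1 := by
  rw [AddMonoidAlgebra.one_def]
  exact Finsupp.single_eq_same

theorem exists_decomp (g : ℕ) (m : Fin g →₀ ℕ) (j : Fin g) (hj : m j ≠ 0) :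
    m = (m - Finsupp.single j 1) + Finsupp.single j 1 := by
  ext i
  rw [Finsupp.add_apply, Finsupp.tsub_apply]
  rcases eq_or_ne j i with rfl | h
  · rw [Finsupp.single_eq_same]
    omega
  · rw [Finsupp.single_eq_of_ne' h]
    omega

theorem sum_decomp (g : ℕ) (m' : Fin g →₀ ℕ) (j : Fin g) :
    (∑ i, ((m' + Finsupp.single j 1 : Fin g →₀ ℕ)) i) = (∑ i, m' i) + 1 := by
  have h : ∀ i : Fin g, ((m' + Finsupp.single j 1 : Fin g →₀ ℕ)) i
      = m' i + (Finsupp.single j 1 : Fin g →₀ ℕ) i := by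
    intro i
    rw [Finsupp.add_apply]
  rw [Finset.sum_congr rfl (fun i _ => h i), Finset.sum_add_distrib, sum_single_one]

theorem xPow_supp (g : ℕ) : ∀ (s : ℕ) (m : Fin g →₀ ℕ), (∑ i, m i) = s →
    ∀ e : Fin g →₀ ℤ, (xPow g m).coeff e ≠ 0 → ∀ i, (e i).natAbs ≤ m i := by
  intro s
  induction s using Nat.strong_induction_on with
  | _ s ih =>
    intro m hs e hne i
    by_cases h0 : m = 0
    · subst h0
      rw [xPow_zero] at hne
      have he : e = 0 := by
        by_contra hne0
        exact hne (one_apply_ne g e hne0)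
      subst he
      simp
    · obtain ⟨j, hj⟩ : ∃ j, m j ≠ 0 := by
        by_contra hall
        push_neg at hall
        exact h0 (Finsupp.ext fun i => hall i)
      have hmm := exists_decomp g m j hj
      have hsum : (∑ i', ((m - Finsupp.single j 1 : Fin g →₀ ℕ)) i') < s := by
        rw [hmm, sum_decomp] at hs
        omega
      rw [hmm, xPow_add_single, mul_xK_apply] at hne
      have key : (xPow g (m - Finsupp.single j 1)).coeff (e - Finsupp.single j 1) ≠ 0
          ∨ (xPow g (m - Finsupp.single j 1)).coeff (e + Finsupp.single j 1) ≠ 0 := by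
        by_contra hc
        push_neg at hc
        rw [hc.1, hc.2, mul_zero, add_zero] at hne
        exact hne rfl
      have hmi : m i = ((m - Finsupp.single j 1 : Fin g →₀ ℕ)) i + (Finsupp.single j 1 : Fin g →₀ ℕ) i := by
        conv_lhs => rw [hmm]
        rw [Finsupp.add_apply]
      rcases key with hk | hk
      · have hb := ih _ hsum _ rfl _ hk i
        rw [Finsupp.sub_apply, Finsupp.single_apply] at hb
        rw [hmi, Finsupp.single_apply]
        split_ifs at hb ⊢ <;> omega
      · have hb := ih _ hsum _ rfl _ hk i
        rw [Finsupp.add_apply, Finsupp.single_apply] at hb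
        rw [hmi, Finsupp.single_apply]
        split_ifs at hb ⊢ <;> omega

theorem xPow_extreme (g : ℕ) : ∀ (s : ℕ) (m : Fin g →₀ ℕ), (∑ i, m i) = s →
    ∀ e : Fin g →₀ ℤ, (∀ i, e i = (m i : ℤ) ∨ e i = -(m i : ℤ)) →
    (xPow g m).coeff e = T (∑ i, ((m i : ℤ) - e i) / 2) := by
  intro s
  induction s using Nat.strong_induction_on with
  | _ s ih =>
    intro m hs e hext
    by_cases h0 : m = 0
    · subst h0
      have he : e = 0 := by
        ext i
        have := hext i
        simp only [Finsupp.coe_zero, Pi.zero_apply] at this ⊢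
        omega
      subst he
      rw [xPow_zero, one_apply_zero]
      rw [show (∑ i, (((0 : Fin g →₀ ℕ) i : ℤ) - (0 : Fin g →₀ ℤ) i) / 2) = 0 by simp, T_zero]
    · obtain ⟨j, hj⟩ : ∃ j, m j ≠ 0 := by
        by_contra hall
        push_neg at hall
        exact h0 (Finsupp.ext fun i => hall i)
      have hmm := exists_decomp g m j hj
      set m' := m - Finsupp.single j 1 with hm'def
      have hsum : (∑ i', m' i') < s := by
        rw [hmm, sum_decomp] at hs
        omega
      have hmj : m j = m' j + 1 := by
        rw [hm'def, Finsupp.tsub_apply, Finsupp.single_eq_same]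
        omega
      have hmi : ∀ i, i ≠ j → m i = m' i := by
        intro i hi
        rw [hm'def, Finsupp.tsub_apply, Finsupp.single_eq_of_ne' (Ne.symm hi)]
        omega
      conv_lhs => rw [hmm]
      rw [xPow_add_single, mul_xK_apply]
      rcases hext j with hej | hej
      · -- e j = m j ≥ 1 : second term vanishes
        have h2 : (xPow g m').coeff (e + Finsupp.single j 1) = 0 := by
          by_contra hc
          have := xPow_supp g _ m' rfl _ hc j
          rw [Finsupp.add_apply, Finsupp.single_eq_same] at this
          omega
        rw [h2, mul_zero, add_zero]
        have hext' : ∀ i, ((e - Finsupp.single j 1 : Fin g →₀ ℤ)) i = (m' i : ℤ)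
            ∨ ((e - Finsupp.single j 1 : Fin g →₀ ℤ)) i = -(m' i : ℤ) := by
          intro i
          rcases eq_or_ne i j with rfl | hi
          · rw [Finsupp.sub_apply, Finsupp.single_eq_same]
            left
            omega
          · rw [Finsupp.sub_apply, Finsupp.single_eq_of_ne' (Ne.symm hi), sub_zero, ← hmi i hi]
            exact hext i
        rw [ih _ hsum m' rfl _ hext']
        congr 1
        apply Finset.sum_congr rfl
        intro i _
        rcases eq_or_ne i j with rfl | hi
        · rw [Finsupp.sub_apply, Finsupp.single_eq_same]
          omega
        · rw [Finsupp.sub_apply, Finsupp.single_eq_of_ne' (Ne.symm hi), sub_zero, ← hmi i hi]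
      · -- e j = -(m j) with m j ≥ 1 : first term vanishes
        have h1 : (xPow g m').coeff (e - Finsupp.single j 1) = 0 := by
          by_contra hc
          have := xPow_supp g _ m' rfl _ hc j
          rw [Finsupp.sub_apply, Finsupp.single_eq_same] at this
          omega
        rw [h1, zero_add]
        have hext' : ∀ i, ((e + Finsupp.single j 1 : Fin g →₀ ℤ)) i = (m' i : ℤ)
            ∨ ((e + Finsupp.single j 1 : Fin g →₀ ℤ)) i = -(m' i : ℤ) := by
          intro i
          rcases eq_or_ne i j with rfl | hi
          · rw [Finsupp.add_apply, Finsupp.single_eq_same]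
            right
            omega
          · rw [Finsupp.add_apply, Finsupp.single_eq_of_ne' (Ne.symm hi), add_zero, ← hmi i hi]
            exact hext i
        rw [ih _ hsum m' rfl _ hext', ← T_add]
        congr 1
        have hterm : ∀ i : Fin g, ((m i : ℤ) - e i) / 2
            = (if i = j then 1 else 0) + ((m' i : ℤ) - (((e + Finsupp.single j 1 : Fin g →₀ ℤ)) i)) / 2 := by
          intro i
          rcases eq_or_ne i j with rfl | hi
          · rw [if_pos rfl, Finsupp.add_apply, Finsupp.single_eq_same]
            omega
          · rw [if_neg hi, Finsupp.add_apply, Finsupp.single_eq_of_ne' (Ne.symm hi), add_zero,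
              ← hmi i hi, zero_add]
        rw [Finset.sum_congr rfl (fun i _ => hterm i), Finset.sum_add_distrib,
          Finset.sum_ite_eq' Finset.univ j (fun _ => (1:ℤ))]
        rw [if_pos (Finset.mem_univ j)]

/-! ### coefficient relation from tau-invariance -/

theorem tau_fixed_rel (g : ℕ) (t : Fin g) (f : Kr g) (hf : tau g t f = f) (e : Fin g →₀ ℤ) :
    f.coeff (flipE g t e) = T (e t) * f.coeff e := by
  have hexp : tau g t f
      = f.coeff.sum (fun e' a => AddMonoidAlgebra.single (flipE g t e') (T (e' t) * a)) := by
    conv_lhs => rw [← AddMonoidAlgebra.sum_coeff_single f]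
    rw [map_finsuppSum]
    exact Finsupp.sum_congr (fun e' _ => tau_single g t e' (f.coeff e'))
  have h1 : f.coeff (flipE g t e) = (tau g t f).coeff (flipE g t e) := by rw [hf]
  rw [hexp, AddMonoidAlgebra.coeff_finsuppSum, Finsupp.sum_apply] at h1
  have h2 : (f.coeff.sum fun e' a =>
      (AddMonoidAlgebra.single (flipE g t e') (T (e' t) * a) : Kr g).coeff (flipE g t e))
      = f.coeff.sum fun e' a => if e' = e then T (e' t) * a else 0 := by
    apply Finsupp.sum_congr
    intro e' _
    rw [AddMonoidAlgebra.coeff_single, Finsupp.single_apply]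
    exact if_congr ⟨fun h => flipE_inj g t h, fun h => by rw [h]⟩ rfl rfl
  rw [h2] at h1
  rw [h1, Finsupp.sum_ite_eq']
  split_ifs with h
  · rfl
  · rw [Finsupp.notMem_support_iff.mp h, mul_zero]

/-! ### embedding ℕ-exponents into ℤ-exponents -/

noncomputable def embN (g : ℕ) (m : Fin g →₀ ℕ) : Fin g →₀ ℤ :=
  Finsupp.mapRange (fun n : ℕ => (n : ℤ)) (by simp) m

theorem embN_apply (g : ℕ) (m : Fin g →₀ ℕ) (i : Fin g) : embN g m i = (m i : ℤ) :=
  Finsupp.mapRange_apply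

theorem rel_extreme (g : ℕ) (f : Kr g) (hf : ∀ t e, f.coeff (flipE g t e) = T (e t) * f.coeff e) :
    ∀ (k : ℕ) (e : Fin g →₀ ℤ) (m : Fin g →₀ ℕ),
      (∀ i, e i = (m i : ℤ) ∨ e i = -(m i : ℤ)) →
      (Finset.univ.filter (fun i => e i ≠ (m i : ℤ))).card ≤ k →
      f.coeff e = T (∑ i, ((m i : ℤ) - e i) / 2) * f.coeff (embN g m) := by
  intro k
  induction k with
  | zero =>
      intro e m hext hcard
      have hfe : ∀ i, e i = (m i : ℤ) := by
        intro i
        by_contra hc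
        have : i ∈ Finset.univ.filter (fun i => e i ≠ (m i : ℤ)) :=
          Finset.mem_filter.mpr ⟨Finset.mem_univ i, hc⟩
        have := Finset.card_pos.mpr ⟨i, this⟩
        omega
      have he : e = embN g m := by
        ext i
        rw [hfe i, embN_apply]
      subst he
      rw [show (∑ i, ((m i : ℤ) - embN g m i) / 2) = 0 from
        Finset.sum_eq_zero (fun i _ => by rw [embN_apply]; omega), T_zero, one_mul]
  | succ k ihk =>
      intro e m hext hcard
      by_cases hemp : (Finset.univ.filter (fun i => e i ≠ (m i : ℤ))).card = 0
      · exact ihk e m hext (by omega)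
      · obtain ⟨t, ht⟩ := Finset.card_pos.mp (show (0:ℕ) < (Finset.univ.filter (fun i => e i ≠ (m i : ℤ))).card by omega)
        have htne : e t ≠ (m t : ℤ) := (Finset.mem_filter.mp ht).2
        have htneg : e t = -(m t : ℤ) := (hext t).resolve_left htne
        have hmt : (m t : ℤ) ≠ 0 := by
          intro h
          exact htne (by omega)
        set e' := flipE g t e with he'def
        have he't : e' t = (m t : ℤ) := by
          rw [he'def, flipE_apply_self, htneg, neg_neg]
        have he'i : ∀ i, i ≠ t → e' i = e i := by
          intro i hi
          rw [he'def, flipE_apply_ne g t e hi]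
        have hext' : ∀ i, e' i = (m i : ℤ) ∨ e' i = -(m i : ℤ) := by
          intro i
          rcases eq_or_ne i t with rfl | hi
          · left; exact he't
          · rw [he'i i hi]; exact hext i
        have hsub : (Finset.univ.filter (fun i => e' i ≠ (m i : ℤ)))
            ⊆ (Finset.univ.filter (fun i => e i ≠ (m i : ℤ))).erase t := by
          intro i hi
          obtain ⟨_, hi2⟩ := Finset.mem_filter.mp hi
          have hit : i ≠ t := by
            intro h
            subst h
            exact hi2 he't
          exact Finset.mem_erase.mpr ⟨hit, Finset.mem_filter.mpr
            ⟨Finset.mem_univ i, by rwa [he'i i hit] at hi2⟩⟩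
        have hcard' : (Finset.univ.filter (fun i => e' i ≠ (m i : ℤ))).card ≤ k := by
          have h1 := Finset.card_le_card hsub
          have h2 := Finset.card_erase_of_mem ht
          omega
        have hrec := ihk e' m hext' hcard'
        have hstep : f.coeff e = T (m t : ℤ) * f.coeff e' := by
          have := hf t e'
          rw [he'def, flipE_flipE, ← he'def, he't] at this
          exact this
        rw [hstep, hrec, ← mul_assoc, ← T_add]
        congr 2
        have hterm : ∀ i : Fin g, ((m i : ℤ) - e i) / 2
            = (if i = t then (m t : ℤ) else 0) + ((m i : ℤ) - e' i) / 2 := by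
          intro i
          rcases eq_or_ne i t with rfl | hi
          · rw [if_pos rfl, he't]
            omega
          · rw [if_neg hi, he'i i hi, zero_add]
        rw [Finset.sum_congr rfl (fun i _ => hterm i), Finset.sum_add_distrib,
          Finset.sum_ite_eq' Finset.univ t (fun _ => (m t : ℤ)), if_pos (Finset.mem_univ t)]

/-! ### psiK -/

noncomputable def psiK (g : ℕ) :
    MvPolynomial (Fin g) (LaurentPolynomial ℤ) →ₐ[LaurentPolynomial ℤ] Kr g :=
  MvPolynomial.aeval (xK g)

theorem psiK_monomial (g : ℕ) (m : Fin g →₀ ℕ) (a : LaurentPolynomial ℤ) :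
    psiK g (MvPolynomial.monomial m a) = a • xPow g m := by
  rw [psiK, MvPolynomial.aeval_monomial, Algebra.smul_def]
  congr 1
  rw [xPow, Finsupp.prod_fintype]
  intro i
  exact pow_zero _

theorem tau_psiK (g : ℕ) (t : Fin g) (p : MvPolynomial (Fin g) (LaurentPolynomial ℤ)) :
    tau g t (psiK g p) = psiK g p := by
  have : (tau g t).comp (psiK g) = psiK g := by
    apply MvPolynomial.algHom_ext
    intro i
    rw [AlgHom.comp_apply, psiK, MvPolynomial.aeval_X, tau_xK]
  exact AlgHom.congr_fun this p

theorem smul_apply' (g : ℕ) (a : LaurentPolynomial ℤ) (v : Kr g) (e : Fin g →₀ ℤ) :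
    (a • v).coeff e = a * v.coeff e := by
  rw [AddMonoidAlgebra.coeff_smul, Finsupp.smul_apply, smul_eq_mul]

theorem psiK_inj (g : ℕ) : Function.Injective (psiK g) := by
  rw [injective_iff_map_eq_zero]
  intro p hp
  by_contra hne
  obtain ⟨m, hm, hmax⟩ : ∃ m ∈ p.support, ∀ x ∈ p.support, ¬ m < x := by
    obtain ⟨m, hm⟩ := Finset.exists_maximal (MvPolynomial.support_nonempty.mpr hne)
    exact ⟨m, hm.prop, fun x hx hlt => lt_irrefl _ (lt_of_lt_of_le hlt (hm.2 hx hlt.le))⟩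
  have hextr : ∀ i, embN g m i = (m i : ℤ) ∨ embN g m i = -(m i : ℤ) := by
    intro i
    left
    exact embN_apply g m i
  have hcoeff : (psiK g p).coeff (embN g m) = MvPolynomial.coeff m p := by
    conv_lhs => rw [p.as_sum]
    rw [map_sum, AddMonoidAlgebra.coeff_sum, Finset.sum_apply']
    rw [Finset.sum_eq_single m]
    · rw [psiK_monomial, smul_apply',
        xPow_extreme g _ m rfl _ hextr,
        show (∑ i, ((m i : ℤ) - embN g m i) / 2) = 0 from
          Finset.sum_eq_zero (fun i _ => by rw [embN_apply]; omega),
        T_zero, mul_one]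
    · intro b hb hbm
      rw [psiK_monomial, smul_apply']
      have hx : (xPow g b).coeff (embN g m) = 0 := by
        by_contra hc
        have hle : m ≤ b := by
          rw [Finsupp.le_iff]
          intro i _
          have := xPow_supp g _ b rfl _ hc i
          rw [embN_apply] at this
          simpa using this
        exact hmax b hb (lt_of_le_of_ne hle (Ne.symm hbm))
      rw [hx, mul_zero]
    · intro hm'
      exact absurd hm hm'
  rw [hp] at hcoeff
  have : MvPolynomial.coeff m p = 0 := by
    rw [← hcoeff]
    rfl
  exact (MvPolynomial.mem_support_iff.mp hm) this

/-! ### the fold of an exponent -/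

noncomputable def foldN (g : ℕ) (e : Fin g →₀ ℤ) : Fin g →₀ ℕ :=
  Finsupp.mapRange Int.natAbs (by simp) e

theorem foldN_apply (g : ℕ) (e : Fin g →₀ ℤ) (i : Fin g) : foldN g e i = (e i).natAbs :=
  Finsupp.mapRange_apply

theorem tau_xPow (g : ℕ) (t : Fin g) (m : Fin g →₀ ℕ) : tau g t (xPow g m) = xPow g m := by
  rw [xPow, map_prod]
  apply Finset.prod_congr rfl
  intro i _
  rw [map_pow, tau_xK]

/-! ### invariant elements lie in the image of psiK -/

theorem inv_mem_range_aux (g : ℕ) : ∀ (D c : ℕ) (f : Kr g),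
    (∀ t, tau g t f = f) →
    (∀ e ∈ f.coeff.support, (∑ i, (e i).natAbs) ≤ D) →
    ((f.coeff.support.filter (fun e => (∑ i, (e i).natAbs) = D)).card ≤ c) →
    ∃ p, psiK g p = f := by
  intro D
  induction D using Nat.strong_induction_on with
  | _ D ihD =>
    intro c
    induction c with
    | zero =>
        intro f hinv hdeg hcard
        rcases Nat.eq_zero_or_pos D with hD | hD
        · subst hD
          have hsupp : f.coeff.support = ∅ := by
            by_contra hne
            obtain ⟨e, he⟩ := Finset.nonempty_of_ne_empty hne
            have h1 : (∑ i, (e i).natAbs) = 0 := le_antisymm (hdeg e he) (Nat.zero_le _)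
            have : e ∈ f.coeff.support.filter (fun e => (∑ i, (e i).natAbs) = 0) :=
              Finset.mem_filter.mpr ⟨he, h1⟩
            have := Finset.card_pos.mpr ⟨e, this⟩
            omega
          refine ⟨0, ?_⟩
          rw [map_zero]
          exact (AddMonoidAlgebra.coeff_eq_zero.mp (Finsupp.support_eq_empty.mp hsupp)).symm
        · refine ihD (D-1) (by omega) ((f.coeff.support.filter
              (fun e => (∑ i, (e i).natAbs) = D - 1)).card) f hinv ?_ le_rfl
          intro e he
          have h1 := hdeg e he
          have h2 : (∑ i, (e i).natAbs) ≠ D := by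
            intro hc
            have : e ∈ f.coeff.support.filter (fun e => (∑ i, (e i).natAbs) = D) :=
              Finset.mem_filter.mpr ⟨he, hc⟩
            have := Finset.card_pos.mpr ⟨e, this⟩
            omega
          omega
    | succ c ihc =>
        intro f hinv hdeg hcard
        by_cases hzero : (f.coeff.support.filter (fun e => (∑ i, (e i).natAbs) = D)).card = 0
        · exact ihc f hinv hdeg (by omega)
        · obtain ⟨e₀, he₀⟩ := Finset.card_pos.mp (show (0:ℕ) <
            (f.coeff.support.filter (fun e => (∑ i, (e i).natAbs) = D)).card by omega)
          obtain ⟨he₀s, he₀d⟩ := Finset.mem_filter.mp he₀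
          set m := foldN g e₀ with hmdef
          have hmi : ∀ i, m i = (e₀ i).natAbs := fun i => foldN_apply g e₀ i
          have hextr : ∀ i, e₀ i = (m i : ℤ) ∨ e₀ i = -(m i : ℤ) := by
            intro i
            rw [hmi i]
            exact Int.natAbs_eq (e₀ i)
          have hsumD : (∑ i, m i) = D := by
            rw [← he₀d]
            exact Finset.sum_congr rfl (fun i _ => hmi i)
          have hrel : ∀ t e, f.coeff (flipE g t e) = T (e t) * f.coeff e :=
            fun t => tau_fixed_rel g t f (hinv t)
          set c₀ := f.coeff (embN g m) with hc₀def
          have hfextreme : ∀ e : Fin g →₀ ℤ, (∀ i, e i = (m i : ℤ) ∨ e i = -(m i : ℤ)) →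
              f.coeff e = T (∑ i, ((m i : ℤ) - e i) / 2) * c₀ :=
            fun e hext => rel_extreme g f hrel _ e m hext le_rfl
          have hc₀ne : c₀ ≠ 0 := by
            intro hc
            have := hfextreme e₀ hextr
            rw [hc, mul_zero] at this
            exact (Finsupp.mem_support_iff.mp he₀s) this
          set f' := f - c₀ • xPow g m with hf'def
          have hinv' : ∀ t, tau g t f' = f' := by
            intro t
            rw [hf'def, map_sub, map_smul, tau_xPow, hinv t]
          have hf'ext : ∀ e : Fin g →₀ ℤ, (∀ i, e i = (m i : ℤ) ∨ e i = -(m i : ℤ)) →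
              f'.coeff e = 0 := by
            intro e hext
            rw [hf'def, AddMonoidAlgebra.coeff_sub, Finsupp.sub_apply, smul_apply', hfextreme e hext,
              xPow_extreme g _ m rfl _ hext]
            ring
          have hf'mem : ∀ e ∈ f'.coeff.support, f.coeff e ≠ 0 ∨ (xPow g m).coeff e ≠ 0 := by
            intro e he
            by_contra hc
            push_neg at hc
            have : f'.coeff e = 0 := by
              rw [hf'def, AddMonoidAlgebra.coeff_sub, Finsupp.sub_apply, smul_apply', hc.1, hc.2, mul_zero, sub_zero]
            exact (Finsupp.mem_support_iff.mp he) this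
          have hdeg' : ∀ e ∈ f'.coeff.support, (∑ i, (e i).natAbs) ≤ D := by
            intro e he
            rcases hf'mem e he with h | h
            · exact hdeg e (Finsupp.mem_support_iff.mpr h)
            · calc (∑ i, (e i).natAbs) ≤ ∑ i, m i :=
                    Finset.sum_le_sum (fun i _ => xPow_supp g _ m rfl _ h i)
                _ = D := hsumD
          have hsub : f'.coeff.support.filter (fun e => (∑ i, (e i).natAbs) = D)
              ⊆ (f.coeff.support.filter (fun e => (∑ i, (e i).natAbs) = D)).erase (embN g m) := by
            intro e he
            obtain ⟨hes, hed⟩ := Finset.mem_filter.mp he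
            have hnotext : ¬ (∀ i, e i = (m i : ℤ) ∨ e i = -(m i : ℤ)) := by
              intro hext
              exact (Finsupp.mem_support_iff.mp hes) (hf'ext e hext)
            have hfe : f.coeff e ≠ 0 := by
              rcases hf'mem e hes with h | h
              · exact h
              · exfalso
                apply hnotext
                intro i
                have hle : ∀ i, (e i).natAbs ≤ m i := fun i => xPow_supp g _ m rfl _ h i
                have heq : ∀ i, (e i).natAbs = m i := by
                  by_contra hcne
                  push_neg at hcne
                  obtain ⟨i', hi'⟩ := hcne
                  have : (∑ i, (e i).natAbs) < ∑ i, m i :=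
                    Finset.sum_lt_sum (fun i _ => hle i)
                      ⟨i', Finset.mem_univ i', lt_of_le_of_ne (hle i') hi'⟩
                  omega
                rw [← heq i]
                exact Int.natAbs_eq (e i)
            have hne0 : e ≠ embN g m := by
              intro hc
              apply hnotext
              intro i
              left
              rw [hc, embN_apply]
            exact Finset.mem_erase.mpr ⟨hne0,
              Finset.mem_filter.mpr ⟨Finsupp.mem_support_iff.mpr hfe, hed⟩⟩
          have hmemb : embN g m ∈ f.coeff.support.filter (fun e => (∑ i, (e i).natAbs) = D) := by
            apply Finset.mem_filter.mpr
            constructor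
            · exact Finsupp.mem_support_iff.mpr hc₀ne
            · rw [← hsumD]
              apply Finset.sum_congr rfl
              intro i _
              rw [embN_apply]
              exact Int.natAbs_natCast (m i)
          have hcard' : (f'.coeff.support.filter (fun e => (∑ i, (e i).natAbs) = D)).card ≤ c := by
            have h1 := Finset.card_le_card hsub
            have h2 := Finset.card_erase_of_mem hmemb
            omega
          obtain ⟨p', hp'⟩ := ihc f' hinv' hdeg' hcard'
          refine ⟨p' + MvPolynomial.monomial m c₀, ?_⟩
          rw [map_add, hp', psiK_monomial, hf'def]
          ring

/-! ### L-side computations -/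

theorem qCoeff_T (g : ℕ) (n : ℤ) : qCoeff g (T n) = ↑(uvar g 0 ^ n) := by
  show qCoeff g (AddMonoidAlgebra.single n 1) = _
  rw [qCoeff, AddMonoidAlgebra.lift_single, one_smul]
  rfl

theorem substHom_single (g : ℕ) (v : Fin (g+1) → (Laur1 g)ˣ) (e : Fin (g+1) →₀ ℤ) (a : ℤ) :
    substHom g v (AddMonoidAlgebra.single e a) = a • (↑(∏ i : Fin (g+1), v i ^ e i) : Laur1 g) := by
  rw [substHom, AddMonoidAlgebra.lift_single]
  rfl

theorem substHom_uvar (g : ℕ) (v : Fin (g+1) → (Laur1 g)ˣ) (j : Fin (g+1)) (n : ℤ) :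
    substHom g v ↑(uvar g j ^ n) = ↑(v j ^ n) := by
  rw [uvar_zpow, substHom_single, one_smul]
  congr 1
  exact prod_zpow_single v j n

theorem substHom_qCoeff (g : ℕ) (v : Fin (g+1) → (Laur1 g)ˣ) (hv : v 0 = uvar g 0)
    (a : LaurentPolynomial ℤ) : substHom g v (qCoeff g a) = qCoeff g a := by
  have : (substHom g v).comp (qCoeff g) = qCoeff g := by
    apply AddMonoidAlgebra.algHom_ext
    intro n
    show substHom g v (qCoeff g (AddMonoidAlgebra.single n 1)) = qCoeff g (AddMonoidAlgebra.single n 1)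
    have hT : (AddMonoidAlgebra.single n 1 : LaurentPolynomial ℤ) = T n := rfl
    rw [hT, qCoeff_T, substHom_uvar, hv, ← qCoeff_T]
    exact Subsingleton.elim _ _
  exact AlgHom.congr_fun this a

/-! ### Phi : Kr g →+* Laur1 g -/

noncomputable def Phi (g : ℕ) : Kr g →+* Laur1 g :=
  AddMonoidAlgebra.liftNCRingHom (qCoeff g).toRingHom
    { toFun := fun e => ↑(∏ i : Fin g, uvar g i.succ ^ (Multiplicative.toAdd e) i)
      map_one' := by simp
      map_mul' := by
        intro a b
        show ((∏ i : Fin g, uvar g i.succ ^ (Multiplicative.toAdd a + Multiplicative.toAdd b) i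
            : (Laur1 g)ˣ) : Laur1 g) = _
        rw [← Units.val_mul]
        congr 1
        rw [← Finset.prod_mul_distrib]
        apply Finset.prod_congr rfl
        intro i _
        rw [Finsupp.add_apply, zpow_add] }
    (fun a b => Commute.all _ _)

theorem Phi_single (g : ℕ) (e : Fin g →₀ ℤ) (a : LaurentPolynomial ℤ) :
    Phi g (AddMonoidAlgebra.single e a)
      = qCoeff g a * ↑(∏ i : Fin g, uvar g i.succ ^ e i) := by
  rw [Phi, AddMonoidAlgebra.liftNCRingHom]
  exact AddMonoidAlgebra.liftNC_single _ _ _ _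

theorem Phi_const (g : ℕ) (a : LaurentPolynomial ℤ) :
    Phi g (AddMonoidAlgebra.single 0 a) = qCoeff g a := by
  rw [Phi_single]
  have : (∏ i : Fin g, uvar g i.succ ^ (0 : Fin g →₀ ℤ) i) = 1 := by
    apply Finset.prod_eq_one
    intro i _
    rw [Finsupp.coe_zero, Pi.zero_apply, zpow_zero]
  rw [this, Units.val_one, mul_one]

theorem Phi_uq_zpow (g : ℕ) (n : ℤ) : Phi g ↑(uq g ^ n) = ↑(uvar g 0 ^ n) := by
  rw [uq_zpow, Phi_const, qCoeff_T]

theorem Phi_uX_zpow (g : ℕ) (i : Fin g) (n : ℤ) :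
    Phi g ↑(uX g i ^ n) = ↑(uvar g i.succ ^ n) := by
  rw [uX_zpow, Phi_single, map_one, one_mul]
  congr 1
  exact prod_zpow_single (fun j => uvar g j.succ) i n

theorem Phi_xK (g : ℕ) (i : Fin g) : Phi g (xK g i) = xElt g i := by
  rw [xK, map_add, xElt]
  congr 1
  · have h1 : (AddMonoidAlgebra.single (Finsupp.single i (1:ℤ)) (1 : LaurentPolynomial ℤ))
        = ↑(uX g i ^ (1:ℤ)) := by rw [uX_zpow]
    rw [h1, Phi_uX_zpow, zpow_one]
  · have h2 : (AddMonoidAlgebra.single (Finsupp.single i (-1:ℤ)) (T 1 : LaurentPolynomial ℤ))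
        = ↑(uq g ^ (1:ℤ)) * ↑(uX g i ^ (-1:ℤ)) := by
      rw [uq_zpow, uX_zpow, AddMonoidAlgebra.single_mul_single, zero_add, mul_one]
    rw [h2, map_mul, Phi_uq_zpow, Phi_uX_zpow, Units.val_mul]
    congr 1
    · rw [zpow_one]
    · rw [← zpow_neg_one]

/-! ### Phi' : Laur1 g →ₐ[ℤ] Kr g -/

noncomputable def Phi' (g : ℕ) : Laur1 g →ₐ[ℤ] Kr g :=
  AddMonoidAlgebra.lift ℤ (Kr g) (Fin (g+1) →₀ ℤ)
    { toFun := fun e =>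
        ↑(uq g ^ (Multiplicative.toAdd e) 0 * ∏ i : Fin g, uX g i ^ (Multiplicative.toAdd e) i.succ)
      map_one' := by simp
      map_mul' := by
        intro a b
        show ((uq g ^ (Multiplicative.toAdd a + Multiplicative.toAdd b) 0
            * ∏ i : Fin g, uX g i ^ (Multiplicative.toAdd a + Multiplicative.toAdd b) i.succ
            : (Kr g)ˣ) : Kr g) = _
        rw [← Units.val_mul]
        congr 1
        rw [Finsupp.add_apply, zpow_add]
        have : (∏ i : Fin g, uX g i ^ (Multiplicative.toAdd a + Multiplicative.toAdd b) i.succ)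
            = (∏ i : Fin g, uX g i ^ (Multiplicative.toAdd a) i.succ)
              * ∏ i : Fin g, uX g i ^ (Multiplicative.toAdd b) i.succ := by
          rw [← Finset.prod_mul_distrib]
          apply Finset.prod_congr rfl
          intro i _
          rw [Finsupp.add_apply, zpow_add]
        rw [this]
        exact mul_mul_mul_comm (uq g ^ (Multiplicative.toAdd a) 0)
          (uq g ^ (Multiplicative.toAdd b) 0) _ _ }

theorem Phi'_single (g : ℕ) (e : Fin (g+1) →₀ ℤ) (a : ℤ) :
    Phi' g (AddMonoidAlgebra.single e a)
      = a • ↑(uq g ^ e 0 * ∏ i : Fin g, uX g i ^ e i.succ) := by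
  rw [Phi', AddMonoidAlgebra.lift_single]
  rfl

theorem Phi'_uvar_zero_zpow (g : ℕ) (n : ℤ) :
    Phi' g ↑(uvar g 0 ^ n) = ↑(uq g ^ n) := by
  rw [uvar_zpow, Phi'_single, one_smul]
  have h1 : (Finsupp.single (0 : Fin (g+1)) n) 0 = n := Finsupp.single_eq_same
  have h2 : (∏ i : Fin g, uX g i ^ (Finsupp.single (0 : Fin (g+1)) n) i.succ) = 1 := by
    apply Finset.prod_eq_one
    intro i _
    rw [Finsupp.single_eq_of_ne' (Fin.succ_ne_zero i).symm, zpow_zero]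
  rw [h1, h2, mul_one]

theorem Phi'_uvar_succ_zpow (g : ℕ) (k : Fin g) (n : ℤ) :
    Phi' g ↑(uvar g k.succ ^ n) = ↑(uX g k ^ n) := by
  rw [uvar_zpow, Phi'_single, one_smul]
  have h1 : (Finsupp.single (k.succ : Fin (g+1)) n) 0 = 0 :=
    Finsupp.single_eq_of_ne' (Fin.succ_ne_zero k)
  have h2 : (∏ i : Fin g, uX g i ^ (Finsupp.single (k.succ : Fin (g+1)) n) i.succ)
      = uX g k ^ n := by
    rw [Finset.prod_eq_single k (fun b _ hb => by
        rw [Finsupp.single_eq_of_ne' (fun hh => hb (Fin.succ_injective g hh).symm), zpow_zero])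
      (fun h => absurd (Finset.mem_univ k) h), Finsupp.single_eq_same]
  rw [h1, h2, zpow_zero, one_mul]

theorem Phi'_qCoeff (g : ℕ) (a : LaurentPolynomial ℤ) :
    Phi' g (qCoeff g a) = AddMonoidAlgebra.single 0 a := by
  have : (Phi' g).comp (qCoeff g)
      = (AddMonoidAlgebra.singleZeroAlgHom : LaurentPolynomial ℤ →ₐ[ℤ] Kr g) := by
    apply AddMonoidAlgebra.algHom_ext
    intro n
    show Phi' g (qCoeff g (AddMonoidAlgebra.single n 1)) = _
    have hT : (AddMonoidAlgebra.single n 1 : LaurentPolynomial ℤ) = T n := rfl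
    rw [hT, qCoeff_T, Phi'_uvar_zero_zpow, uq_zpow]
    rfl
    exact Subsingleton.elim _ _
  exact AlgHom.congr_fun this a

/-! ### ring hom extensionality via units -/

theorem map_unit_coe {R S : Type*} [CommRing R] [CommRing S] (F : R →+* S) (u : Rˣ) :
    F ↑u = ↑(Units.map (F : R →* S) u) := rfl

theorem ringHom_ext_Kr {S : Type*} [CommRing S] (g : ℕ) (F G : Kr g →+* S)
    (hc : ∀ a : LaurentPolynomial ℤ,
      F (AddMonoidAlgebra.single 0 a) = G (AddMonoidAlgebra.single 0 a))
    (hX : ∀ i, F ↑(uX g i) = G ↑(uX g i)) : F = G := by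
  apply AddMonoidAlgebra.ringHom_ext hc
  intro e
  have hsingle : (AddMonoidAlgebra.single e 1 : Kr g) = ↑(∏ i, uX g i ^ e i) :=
    (prod_uX_zpow g e).symm
  rw [hsingle, map_unit_coe, map_unit_coe, map_prod, map_prod]
  congr 1
  apply Finset.prod_congr rfl
  intro i _
  rw [map_zpow, map_zpow]
  congr 1
  exact Units.ext (hX i)

theorem ringHom_ext_Laur {S : Type*} [CommRing S] (g : ℕ) (F G : Laur1 g →+* S)
    (hX : ∀ j, F ↑(uvar g j) = G ↑(uvar g j)) : F = G := by
  apply AddMonoidAlgebra.ringHom_ext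
  · intro b
    have hb : (AddMonoidAlgebra.single (0 : Fin (g+1) →₀ ℤ) b : Laur1 g) = b • 1 := by
      rw [AddMonoidAlgebra.one_def, AddMonoidAlgebra.smul_single]
      norm_num
    rw [hb, map_zsmul, map_zsmul, map_one, map_one]
  · intro e
    have hsingle : (AddMonoidAlgebra.single e 1 : Laur1 g) = ↑(∏ i, uvar g i ^ e i) :=
      (prod_uvar_zpow g e).symm
    rw [hsingle, map_unit_coe, map_unit_coe, map_prod, map_prod]
    congr 1
    apply Finset.prod_congr rfl
    intro i _
    rw [map_zpow, map_zpow]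
    congr 1
    exact Units.ext (hX i)

/-! ### Phi and Phi' are inverse -/

theorem PhiPhi' (g : ℕ) : (Phi g).comp (Phi' g).toRingHom = RingHom.id (Laur1 g) := by
  apply ringHom_ext_Laur
  intro j
  rw [RingHom.comp_apply, RingHom.id_apply]
  induction j using Fin.cases with
  | zero =>
      show Phi g ((Phi' g).toRingHom ↑(uvar g 0)) = _
      rw [show ((uvar g 0 : (Laur1 g)ˣ) : Laur1 g) = ↑(uvar g 0 ^ (1:ℤ)) by rw [zpow_one]]
      show Phi g (Phi' g _) = _
      rw [Phi'_uvar_zero_zpow, Phi_uq_zpow]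
  | succ k =>
      show Phi g (Phi' g ↑(uvar g k.succ)) = _
      rw [show ((uvar g k.succ : (Laur1 g)ˣ) : Laur1 g) = ↑(uvar g k.succ ^ (1:ℤ)) by rw [zpow_one]]
      rw [Phi'_uvar_succ_zpow, Phi_uX_zpow]

theorem Phi'Phi (g : ℕ) : (Phi' g).toRingHom.comp (Phi g) = RingHom.id (Kr g) := by
  apply ringHom_ext_Kr
  · intro a
    rw [RingHom.comp_apply, RingHom.id_apply]
    show Phi' g (Phi g (AddMonoidAlgebra.single 0 a)) = _
    rw [Phi_const, Phi'_qCoeff]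
  · intro i
    rw [RingHom.comp_apply, RingHom.id_apply]
    show Phi' g (Phi g ↑(uX g i)) = _
    rw [show ((uX g i : (Kr g)ˣ) : Kr g) = ↑(uX g i ^ (1:ℤ)) by rw [zpow_one]]
    rw [Phi_uX_zpow, Phi'_uvar_succ_zpow]

theorem Phi_Phi'_apply (g : ℕ) (x : Laur1 g) : Phi g (Phi' g x) = x :=
  RingHom.congr_fun (PhiPhi' g) x

theorem Phi'_Phi_apply (g : ℕ) (x : Kr g) : Phi' g (Phi g x) = x :=
  RingHom.congr_fun (Phi'Phi g) x

theorem Phi_inj (g : ℕ) : Function.Injective (Phi g) := by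
  intro x y h
  have := congrArg (Phi' g) h
  rwa [Phi'_Phi_apply, Phi'_Phi_apply] at this

/-! ### transport of the involutions -/

theorem invAssign_zero (g : ℕ) (t : Fin g) : invAssign g t 0 = uvar g 0 := by
  rw [invAssign, if_neg (Fin.succ_ne_zero t).symm]

theorem invAssign_succ_self (g : ℕ) (t : Fin g) :
    invAssign g t t.succ = uvar g 0 * (uvar g t.succ)⁻¹ := by
  rw [invAssign, if_pos rfl]

theorem invAssign_succ_ne (g : ℕ) (t i : Fin g) (h : i ≠ t) :
    invAssign g t i.succ = uvar g i.succ := by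
  rw [invAssign, if_neg (fun hh => h (Fin.succ_injective g hh))]

theorem tau_transport (g : ℕ) (t : Fin g) :
    (Phi' g).toRingHom.comp (((substHom g (invAssign g t)).toRingHom).comp (Phi g))
      = (tau g t).toRingHom := by
  apply ringHom_ext_Kr
  · intro a
    show Phi' g (substHom g (invAssign g t) (Phi g (AddMonoidAlgebra.single 0 a)))
      = tau g t (AddMonoidAlgebra.single 0 a)
    rw [Phi_const, substHom_qCoeff g _ (invAssign_zero g t), Phi'_qCoeff, tau_single,
      flipE_zero]
    rw [show ((0 : Fin g →₀ ℤ) t) = 0 from rfl, T_zero, one_mul]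
  · intro i
    show Phi' g (substHom g (invAssign g t) (Phi g ↑(uX g i))) = tau g t ↑(uX g i)
    have hXi : ((uX g i : (Kr g)ˣ) : Kr g) = ↑(uX g i ^ (1:ℤ)) := by rw [zpow_one]
    have htau : tau g t ↑(uX g i)
        = AddMonoidAlgebra.single (flipE g t (Finsupp.single i 1))
            (T ((Finsupp.single i (1:ℤ)) t)) := by
      show tau g t (AddMonoidAlgebra.single (Finsupp.single i (1:ℤ)) 1) = _
      rw [tau_single, mul_one]
    rw [htau]
    conv_lhs => rw [hXi]
    rw [Phi_uX_zpow, substHom_uvar]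
    rcases eq_or_ne i t with rfl | hit
    · rw [invAssign_succ_self, flipE_single, if_pos rfl, Finsupp.single_eq_same]
      rw [zpow_one, Units.val_mul, map_mul]
      rw [show ((uvar g 0 : (Laur1 g)ˣ) : Laur1 g) = ↑(uvar g 0 ^ (1:ℤ)) by rw [zpow_one],
        show (((uvar g i.succ)⁻¹ : (Laur1 g)ˣ) : Laur1 g) = ↑(uvar g i.succ ^ (-1:ℤ)) by
          rw [zpow_neg_one],
        Phi'_uvar_zero_zpow, Phi'_uvar_succ_zpow, uq_zpow, uX_zpow,
        AddMonoidAlgebra.single_mul_single, zero_add, mul_one]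
    · rw [invAssign_succ_ne g t i hit, zpow_one, flipE_single, if_neg hit,
        Finsupp.single_eq_of_ne' hit, T_zero]
      rw [show ((uvar g i.succ : (Laur1 g)ˣ) : Laur1 g) = ↑(uvar g i.succ ^ (1:ℤ)) by
        rw [zpow_one]]
      rw [Phi'_uvar_succ_zpow, uX_zpow]

theorem substI_Phi (g : ℕ) (t : Fin g) (x : Kr g) :
    substHom g (invAssign g t) (Phi g x) = Phi g (tau g t x) := by
  have h := RingHom.congr_fun (tau_transport g t) x
  have h2 : Phi' g (substHom g (invAssign g t) (Phi g x)) = tau g t x := h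
  calc substHom g (invAssign g t) (Phi g x)
      = Phi g (Phi' g (substHom g (invAssign g t) (Phi g x))) := (Phi_Phi'_apply g _).symm
    _ = Phi g (tau g t x) := by rw [h2]

/-! ### permutation equivariance -/

theorem permAssign_zero (g : ℕ) (σ : Equiv.Perm (Fin g)) : permAssign g σ 0 = uvar g 0 := by
  rw [permAssign]
  exact Fin.cases_zero

theorem permAssign_succ (g : ℕ) (σ : Equiv.Perm (Fin g)) (i : Fin g) :
    permAssign g σ i.succ = uvar g (σ i).succ := by
  rw [permAssign]
  exact Fin.cases_succ i

theorem substP_xElt (g : ℕ) (σ : Equiv.Perm (Fin g)) (i : Fin g) :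
    substHom g (permAssign g σ) (xElt g i) = xElt g (σ i) := by
  rw [xElt, map_add, xElt]
  congr 1
  · rw [show ((uvar g i.succ : (Laur1 g)ˣ) : Laur1 g) = ↑(uvar g i.succ ^ (1:ℤ)) by
      rw [zpow_one]]
    rw [substHom_uvar, permAssign_succ, zpow_one]
  · rw [Units.val_mul, map_mul,
      show ((uvar g 0 : (Laur1 g)ˣ) : Laur1 g) = ↑(uvar g 0 ^ (1:ℤ)) by rw [zpow_one],
      show (((uvar g i.succ)⁻¹ : (Laur1 g)ˣ) : Laur1 g) = ↑(uvar g i.succ ^ (-1:ℤ)) by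
        rw [zpow_neg_one],
      substHom_uvar, substHom_uvar, permAssign_zero, permAssign_succ, Units.val_mul]
    rw [zpow_one, ← zpow_neg_one]

/-! ### the symmetric-polynomial evaluation map -/

noncomputable def Esym (g : ℕ) :
    MvPolynomial (Fin g) (LaurentPolynomial ℤ) →ₐ[LaurentPolynomial ℤ]
      MvPolynomial (Fin g) (LaurentPolynomial ℤ) :=
  ((MvPolynomial.symmetricSubalgebra (Fin g) (LaurentPolynomial ℤ)).val).comp
    (MvPolynomial.esymmAlgHom (Fin g) (LaurentPolynomial ℤ) g)

theorem Esym_X (g : ℕ) (i : Fin g) :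
    Esym g (MvPolynomial.X i) = MvPolynomial.esymm (Fin g) (LaurentPolynomial ℤ) (i + 1) := by
  rw [Esym, AlgHom.comp_apply, MvPolynomial.esymmAlgHom, MvPolynomial.aeval_X]
  rfl

theorem Esym_inj (g : ℕ) : Function.Injective (Esym g) := by
  rw [Esym]
  exact Subtype.val_injective.comp
    (MvPolynomial.esymmAlgHom_fin_injective (LaurentPolynomial ℤ) (le_refl g))

theorem Esym_symm (g : ℕ) (p : MvPolynomial (Fin g) (LaurentPolynomial ℤ)) :
    (Esym g p).IsSymmetric :=
  (MvPolynomial.esymmAlgHom (Fin g) (LaurentPolynomial ℤ) g p).2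

theorem psiK_C (g : ℕ) (a : LaurentPolynomial ℤ) :
    psiK g (MvPolynomial.C a) = AddMonoidAlgebra.single 0 a := by
  rw [show (MvPolynomial.C a : MvPolynomial (Fin g) (LaurentPolynomial ℤ))
      = algebraMap (LaurentPolynomial ℤ) _ a from rfl]
  rw [AlgHom.commutes]
  rfl

theorem Phi_psiK_esymm (g : ℕ) (n : ℕ) :
    Phi g (psiK g (MvPolynomial.esymm (Fin g) (LaurentPolynomial ℤ) n)) = yElt g n := by
  rw [MvPolynomial.esymm, map_sum, map_sum, yElt]
  apply Finset.sum_congr rfl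
  intro s _
  rw [map_prod, map_prod]
  apply Finset.prod_congr rfl
  intro i _
  rw [psiK, MvPolynomial.aeval_X, Phi_xK]

theorem theta_decomp (g : ℕ) (p : MvPolynomial (Fin g) (LaurentPolynomial ℤ)) :
    theta g p = Phi g (psiK g (Esym g p)) := by
  have h : theta g = ((Phi g).comp (psiK g).toRingHom).comp (Esym g).toRingHom := by
    apply MvPolynomial.ringHom_ext
    · intro a
      rw [theta, MvPolynomial.eval₂Hom_C]
      show (qCoeff g).toRingHom a = Phi g (psiK g (Esym g (MvPolynomial.C a)))
      rw [show (MvPolynomial.C a : MvPolynomial (Fin g) (LaurentPolynomial ℤ))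
          = algebraMap (LaurentPolynomial ℤ) _ a from rfl, AlgHom.commutes]
      rw [show (algebraMap (LaurentPolynomial ℤ) (MvPolynomial (Fin g) (LaurentPolynomial ℤ)) a)
          = MvPolynomial.C a from rfl]
      rw [psiK_C, Phi_const]
      rfl
    · intro i
      rw [theta, MvPolynomial.eval₂Hom_X']
      show yElt g (i.1 + 1) = Phi g (psiK g (Esym g (MvPolynomial.X i)))
      rw [Esym_X, Phi_psiK_esymm]
  rw [h]
  rfl

theorem substP_Phi_psiK (g : ℕ) (σ : Equiv.Perm (Fin g))
    (p : MvPolynomial (Fin g) (LaurentPolynomial ℤ)) :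
    substHom g (permAssign g σ) (Phi g (psiK g p))
      = Phi g (psiK g (MvPolynomial.rename σ p)) := by
  have h : ((substHom g (permAssign g σ)).toRingHom).comp ((Phi g).comp (psiK g).toRingHom)
      = ((Phi g).comp (psiK g).toRingHom).comp (MvPolynomial.rename σ).toRingHom := by
    apply MvPolynomial.ringHom_ext
    · intro a
      show substHom g (permAssign g σ) (Phi g (psiK g (MvPolynomial.C a)))
        = Phi g (psiK g (MvPolynomial.rename σ (MvPolynomial.C a)))
      rw [MvPolynomial.rename_C, psiK_C, Phi_const,
        substHom_qCoeff g _ (permAssign_zero g σ)]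
    · intro i
      show substHom g (permAssign g σ) (Phi g (psiK g (MvPolynomial.X i)))
        = Phi g (psiK g (MvPolynomial.rename σ (MvPolynomial.X i)))
      rw [MvPolynomial.rename_X, psiK, MvPolynomial.aeval_X, MvPolynomial.aeval_X,
        Phi_xK, Phi_xK, substP_xElt]
  exact RingHom.congr_fun h p

end Stmt9

/-- Let `W = 𝔖_g ⋉ (ℤ/2ℤ)^g` act on `ℤ[q^{±1}, α_1^{±1}, …, α_g^{±1}]` by fixing `q`,
permuting the `α_i`, and via the involutions `α_i ↦ q α_i^{-1}`.  With
`x_i := α_i + q α_i^{-1}` and `y_j := e_j(x_1, …, x_g)`, the ring of `W`-invariants is the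
free `ℤ[q^{±1}]`-algebra on `y_1, …, y_g`: the evaluation map `θ` from
`ℤ[q^{±1}][Y_1, …, Y_g]` sending `Y_j ↦ y_j` is injective, and its range is exactly the
set of `W`-invariant Laurent polynomials — so every invariant is uniquely a polynomial in
`y_1, …, y_g` with coefficients in `ℤ[q^{±1}]`. -/
theorem stmt_9 (g : ℕ) (hg : 1 ≤ g) :
    Function.Injective (theta g) ∧
    ∀ f : Laur1 g,
      ((∀ σ : Equiv.Perm (Fin g), substHom g (permAssign g σ) f = f) ∧
        (∀ t : Fin g, substHom g (invAssign g t) f = f))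
        ↔ f ∈ Set.range (theta g) := by
  constructor
  · -- injectivity
    intro p q h
    rw [Stmt9.theta_decomp, Stmt9.theta_decomp] at h
    exact Stmt9.Esym_inj g (Stmt9.psiK_inj g (Stmt9.Phi_inj g h))
  · intro f
    constructor
    · rintro ⟨hperm, hinvs⟩
      set fK := Stmt9.Phi' g f with hfKdef
      have hfk : Stmt9.Phi g fK = f := Stmt9.Phi_Phi'_apply g f
      have htau : ∀ t, Stmt9.tau g t fK = fK := by
        intro t
        have h1 : Stmt9.Phi g (Stmt9.tau g t fK) = Stmt9.Phi g fK := by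
          rw [← Stmt9.substI_Phi, hfk, hinvs t]
        exact Stmt9.Phi_inj g h1
      obtain ⟨p, hp⟩ := Stmt9.inv_mem_range_aux g
        (fK.coeff.support.sup (fun e => ∑ i, (e i).natAbs))
        ((fK.coeff.support.filter (fun e => (∑ i, (e i).natAbs)
          = fK.coeff.support.sup (fun e => ∑ i, (e i).natAbs))).card)
        fK htau (fun e he => Finset.le_sup (f := fun e => ∑ i, (e i).natAbs) he) le_rfl
      have hfp : f = Stmt9.Phi g (Stmt9.psiK g p) := by rw [hp, hfk]
      have hsym : p.IsSymmetric := by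
        intro σ
        apply Stmt9.psiK_inj g
        apply Stmt9.Phi_inj g
        rw [← Stmt9.substP_Phi_psiK, ← hfp, hperm σ, hfp]
      obtain ⟨p', hp'⟩ := (MvPolynomial.esymmAlgHom_fin_bijective (LaurentPolynomial ℤ) g).2
        ⟨p, (MvPolynomial.mem_symmetricSubalgebra _).mpr hsym⟩
      refine ⟨p', ?_⟩
      rw [Stmt9.theta_decomp]
      have : Stmt9.Esym g p' = p := by
        rw [Stmt9.Esym, AlgHom.comp_apply, hp']
        rfl
      rw [this, ← hfp]
    · rintro ⟨p, rfl⟩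
      rw [Stmt9.theta_decomp]
      constructor
      · intro σ
        rw [Stmt9.substP_Phi_psiK]
        congr 1
        congr 1
        exact Stmt9.Esym_symm g p σ
      · intro t
        rw [Stmt9.substI_Phi, Stmt9.tau_psiK]
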